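/- Let L be a Lie algebra over a field K of characteristic ≠ 2, and let x ∈ L be an extremal element with associated linear form f_x. Then for all y, z ∈ L, the second Premet identity holds: 2 • ⁅⁅x,y⁆, ⁅x,z⁆⁆ = f_x(⁅y,z⁆) • x + f_x(z) • ⁅x,y⁆ - f_x(y) • ⁅x,z⁆. -/

import Mathlib

/-!
Expanding `(ad x)² ⁅y, z⁆` by the second-order Leibniz rule gives
`(ad x)² ⁅y, z⁆ = ⁅(ad x)² y, z⁆ + 2 ⁅⁅x, y⁆, ⁅x, z⁆⁆ + ⁅y, (ad x)² z⁆`;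
for extremal `x` the three squared terms become `f ⁅y, z⁆ • x`, `f y • ⁅x, z⁆` and
`f z • ⁅y, x⁆`, and solving for the middle term gives the identity.
-/

theorem leibniz_lie_twice {L : Type*} [LieRing L] (x y z : L) :
    ⁅x, ⁅x, ⁅y, z⁆⁆⁆ = ⁅⁅x, ⁅x, y⁆⁆, z⁆ + 2 • ⁅⁅x, y⁆, ⁅x, z⁆⁆ + ⁅y, ⁅x, ⁅x, z⁆⁆⁆ := by
  rw [leibniz_lie x y z, lie_add, leibniz_lie x ⁅x, y⁆ z, leibniz_lie x y ⁅x, z⁆]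
  abel

theorem premet_identity_two_general {K L : Type*} [Field K] [LieRing L] [LieAlgebra K L]
    (x : L) (fx : L →ₗ[K] K)
    (hx : ∀ y : L, ⁅x, ⁅x, y⁆⁆ = fx y • x) :
    ∀ y z : L, (2 : K) • ⁅⁅x, y⁆, ⁅x, z⁆⁆ =
      fx ⁅y, z⁆ • x + fx z • ⁅x, y⁆ - fx y • ⁅x, z⁆ := by
  intro y z
  have leibniz := leibniz_lie_twice x y z
  rw [hx, hx, hx, smul_lie, lie_smul, ← lie_skew y x] at leibniz
  rw [ofNat_smul_eq_nsmul K 2, leibniz]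
  module

theorem premet_identity_two {K L : Type*} [Field K] [LieRing L] [LieAlgebra K L]
    (hchar : (2 : K) ≠ 0) (x : L) (fx : L →ₗ[K] K)
    (hx : ∀ y : L, ⁅x, ⁅x, y⁆⁆ = fx y • x) :
    ∀ y z : L, (2 : K) • ⁅⁅x, y⁆, ⁅x, z⁆⁆ =
      fx ⁅y, z⁆ • x + fx z • ⁅x, y⁆ - fx y • ⁅x, z⁆ :=
  premet_identity_two_general x fx hx
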